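/- arXiv:1805.11692 — 6 statements merged into one kernel-verified Lean document; each statement's English description precedes it below -/
import Mathlib

section
/- A finite group G can be written as the union of three proper subgroups if and only if G has a quotient isomorphic to the Klein four-group C2 × C2. -/
/-!
If `G = K ∪ L ∪ M` with all three subgroups proper, then no two of them cover `G`, so each of
them contains an element lying in neither of the other two. Translating by such elements shows
that the three pairwise intersections coincide, and then that the product of two elements outside
`K` lies in `K`. Hence `K`, and likewise `L`, has index two, and the sign characters `G → C₂` of
`K` and `L` combine to a surjection onto `C₂ × C₂`. Conversely, `C₂ × C₂` is the union of its
three subgroups of order two, and such a cover pulls back along any surjection.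
-/

local notation "C₂" => Multiplicative (ZMod 2)

namespace Subgroup

variable {G : Type*} [Group G]

theorem exists_notMem_notMem_of_ne_top {K L : Subgroup G} (hK : K ≠ ⊤) (hL : L ≠ ⊤) :
    ∃ g, g ∉ K ∧ g ∉ L := by
  obtain ⟨x, hxK⟩ : ∃ x, x ∉ K := by simpa [eq_top_iff'] using hK
  obtain ⟨y, hyL⟩ : ∃ y, y ∉ L := by simpa [eq_top_iff'] using hL
  by_cases hxL : x ∈ L
  · by_cases hyK : y ∈ K
    · exact ⟨x * y, (mul_mem_cancel_right hyK).not.2 hxK, (mul_mem_cancel_left hxL).not.2 hyL⟩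
    · exact ⟨y, hyK, hyL⟩
  · exact ⟨x, hxK, hxL⟩

section Cover

variable {K L M : Subgroup G}

theorem inf_le_of_cover (hK : K ≠ ⊤) (hL : L ≠ ⊤) (hcov : ∀ g, g ∈ K ∨ g ∈ L ∨ g ∈ M) :
    K ⊓ L ≤ M := by
  obtain ⟨c, hcK, hcL⟩ := exists_notMem_notMem_of_ne_top hK hL
  intro x hx
  obtain ⟨hxK, hxL⟩ := mem_inf.1 hx
  have hcxM : c * x ∈ M := by
    simpa [mul_mem_cancel_right hxK, mul_mem_cancel_right hxL, hcK, hcL] using hcov (c * x)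
  have hcM : c ∈ M := by simpa [hcK, hcL] using hcov c
  exact (mul_mem_cancel_left hcM).1 hcxM

theorem mul_mem_of_cover (hL : L ≠ ⊤) (hM : M ≠ ⊤) (hcov : ∀ g, g ∈ K ∨ g ∈ L ∨ g ∈ M)
    {x y : G} (hxL : x ∈ L) (hxK : x ∉ K) (hyL : y ∈ L) (hyK : y ∉ K) : x * y ∈ K := by
  obtain ⟨a, haL, haM⟩ := exists_notMem_notMem_of_ne_top hL hM
  have haK : a ∈ K := by simpa [haL, haM] using hcov a
  have hmul : ∀ z ∈ L, z ∉ K → a * z ∈ M := fun z hzL hzK => by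
    simpa [mul_mem_cancel_left haK, hzK, (mul_mem_cancel_right hzL).not.2 haL] using hcov (a * z)
  have hxyM : x * y ∈ M := by
    simpa [mul_assoc] using
      M.mul_mem (M.inv_mem (hmul x⁻¹ (L.inv_mem hxL) (inv_mem_iff.not.2 hxK))) (hmul y hyL hyK)
  exact inf_le_of_cover hL hM (fun g => (hcov g).rotate) (mem_inf.2 ⟨L.mul_mem hxL hyL, hxyM⟩)

theorem index_eq_two_of_cover (hK : K ≠ ⊤) (hL : L ≠ ⊤) (hM : M ≠ ⊤)
    (hcov : ∀ g, g ∈ K ∨ g ∈ L ∨ g ∈ M) : K.index = 2 := by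
  have hcov' : ∀ g, g ∈ K ∨ g ∈ M ∨ g ∈ L := fun g => (hcov g).imp_right Or.symm
  have hLM : L ⊓ M ≤ K := inf_le_of_cover hL hM fun g => (hcov g).rotate
  obtain ⟨a, haK⟩ : ∃ a, a ∉ K := by simpa [eq_top_iff'] using hK
  refine index_eq_two_iff_exists_notMem_and'.2
    ⟨a, haK, fun b => or_iff_not_imp_right.2 fun hbK => ?_⟩
  rcases (hcov a).resolve_left haK with haL | haM <;>
    rcases (hcov b).resolve_left hbK with hbL | hbM
  · exact mul_mem_of_cover hL hM hcov haL haK hbL hbK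
  · have hbL : b ∉ L := fun hbL => hbK (hLM <| mem_inf.2 ⟨hbL, hbM⟩)
    have haM : a ∉ M := fun haM => haK (hLM <| mem_inf.2 ⟨haL, haM⟩)
    simpa [(mul_mem_cancel_left haL).not.2 hbL, (mul_mem_cancel_right hbM).not.2 haM] using
      hcov (a * b)
  · have hbM : b ∉ M := fun hbM => hbK (hLM <| mem_inf.2 ⟨hbL, hbM⟩)
    have haL : a ∉ L := fun haL => haK (hLM <| mem_inf.2 ⟨haL, haM⟩)
    simpa [(mul_mem_cancel_left haM).not.2 hbM, (mul_mem_cancel_right hbL).not.2 haL] using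
      hcov (a * b)
  · exact mul_mem_of_cover hM hL hcov' haM haK hbM hbK

end Cover

section IndexTwo

variable (H : Subgroup G) (hH : H.index = 2)

open Classical in
noncomputable def indexTwoChar : G →* C₂ :=
  MonoidHom.mk' (fun x => if x ∈ H then 1 else Multiplicative.ofAdd 1) fun x y => by
    by_cases hx : x ∈ H <;> by_cases hy : y ∈ H <;>
      simp [mul_mem_iff_of_index_two hH, hx, hy, ← ofAdd_add, CharTwo.add_self_eq_zero]

theorem ker_indexTwoChar : (indexTwoChar H hH).ker = H := by
  ext x
  by_cases hx : x ∈ H <;> simp [indexTwoChar, hx]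

theorem exists_mem_indexTwoChar_eq {L : Subgroup G} {b : G} (hbL : b ∈ L) (hbH : b ∉ H)
    (w : C₂) : ∃ x ∈ L, indexTwoChar H hH x = w := by
  obtain rfl | rfl : w = 1 ∨ w = Multiplicative.ofAdd 1 := by revert w; decide
  · exact ⟨1, L.one_mem, map_one _⟩
  · exact ⟨b, hbL, by simp [indexTwoChar, hbH]⟩

end IndexTwo

end Subgroup

theorem MonoidHom.prod_surjective_of_ker {G A B : Type*} [Group G] [Monoid A] [Monoid B]
    {f : G →* A} {g : G →* B} (hf : ∀ a, ∃ x ∈ g.ker, f x = a) (hg : ∀ b, ∃ y ∈ f.ker, g y = b) :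
    Function.Surjective (f.prod g) := by
  rintro ⟨a, b⟩
  obtain ⟨x, hx, rfl⟩ := hf a
  obtain ⟨y, hy, rfl⟩ := hg b
  rw [mem_ker] at hx hy
  exact ⟨x * y, by simp [hx, hy]⟩

def Group.IsUnionOfThreeProperSubgroups (G : Type*) [Group G] : Prop :=
  ∃ H1 H2 H3 : Subgroup G, H1 ≠ ⊤ ∧ H2 ≠ ⊤ ∧ H3 ≠ ⊤ ∧
    (H1 : Set G) ∪ (H2 : Set G) ∪ (H3 : Set G) = Set.univ

namespace Group.IsUnionOfThreeProperSubgroups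

variable {G : Type*} [Group G]

theorem of_surjective {H : Type*} [Group H] (f : G →* H) (hf : Function.Surjective f)
    (h : IsUnionOfThreeProperSubgroups H) : IsUnionOfThreeProperSubgroups G := by
  obtain ⟨H1, H2, H3, h1, h2, h3, hU⟩ := h
  have comap_ne_top {K : Subgroup H} (hK : K ≠ ⊤) : K.comap f ≠ ⊤ := by
    rwa [← Subgroup.comap_top f, (Subgroup.comap_injective hf).ne_iff]
  refine ⟨H1.comap f, H2.comap f, H3.comap f,
    comap_ne_top h1, comap_ne_top h2, comap_ne_top h3, ?_⟩
  simp only [Subgroup.coe_comap, ← Set.preimage_union, hU, Set.preimage_univ]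

theorem klein : IsUnionOfThreeProperSubgroups (C₂ × C₂) := by
  refine ⟨(MonoidHom.fst C₂ C₂).ker, (MonoidHom.snd C₂ C₂).ker,
    (MonoidHom.fst C₂ C₂ * MonoidHom.snd C₂ C₂).ker, ?_, ?_, ?_, ?_⟩ <;>
    simp only [Ne, Subgroup.eq_top_iff', Set.eq_univ_iff_forall, Set.mem_union,
      SetLike.mem_coe] <;> decide

theorem exists_surjective_klein (h : IsUnionOfThreeProperSubgroups G) :
    ∃ φ : G →* C₂ × C₂, Function.Surjective φ := by
  obtain ⟨K, L, M, hK, hL, hM, hU⟩ := h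
  have hcov : ∀ g, g ∈ K ∨ g ∈ L ∨ g ∈ M := fun g => by
    simpa [or_assoc] using Set.eq_univ_iff_forall.1 hU g
  have hKi := Subgroup.index_eq_two_of_cover hK hL hM hcov
  have hLi := Subgroup.index_eq_two_of_cover hL hK hM fun g => or_left_comm.1 (hcov g)
  obtain ⟨a, haL, haM⟩ := Subgroup.exists_notMem_notMem_of_ne_top hL hM
  obtain ⟨b, hbK, hbM⟩ := Subgroup.exists_notMem_notMem_of_ne_top hK hM
  have haK : a ∈ K := by simpa [haL, haM] using hcov a
  have hbL : b ∈ L := by simpa [hbK, hbM] using hcov b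
  refine ⟨(K.indexTwoChar hKi).prod (L.indexTwoChar hLi), MonoidHom.prod_surjective_of_ker ?_ ?_⟩
  · simpa only [Subgroup.ker_indexTwoChar] using K.exists_mem_indexTwoChar_eq hKi hbL hbK
  · simpa only [Subgroup.ker_indexTwoChar] using L.exists_mem_indexTwoChar_eq hLi haK haL

end Group.IsUnionOfThreeProperSubgroups

theorem union_of_three_proper_iff_klein_quotient_general
    (G : Type*) [Group G] :
    (∃ H1 H2 H3 : Subgroup G, H1 ≠ ⊤ ∧ H2 ≠ ⊤ ∧ H3 ≠ ⊤ ∧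
      (H1 : Set G) ∪ (H2 : Set G) ∪ (H3 : Set G) = Set.univ) ↔
    (∃ φ : G →* Multiplicative (ZMod 2) × Multiplicative (ZMod 2), Function.Surjective φ) := by
  constructor
  · exact Group.IsUnionOfThreeProperSubgroups.exists_surjective_klein
  · rintro ⟨φ, hφ⟩
    exact Group.IsUnionOfThreeProperSubgroups.klein.of_surjective φ hφ

theorem union_of_three_proper_iff_klein_quotient
    (G : Type*) [Group G] [Finite G] :
    (∃ H1 H2 H3 : Subgroup G, H1 ≠ ⊤ ∧ H2 ≠ ⊤ ∧ H3 ≠ ⊤ ∧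
      (H1 : Set G) ∪ (H2 : Set G) ∪ (H3 : Set G) = Set.univ) ↔
    (∃ φ : G →* Multiplicative (ZMod 2) × Multiplicative (ZMod 2), Function.Surjective φ) :=
  union_of_three_proper_iff_klein_quotient_general G
end

section
/- If G = H1 ∪ H2 ∪ H3 where H1, H2, H3 are irredundant proper subgroups of a group G (no Hi is contained in the union of the other two), then the intersection H = H1 ∩ H2 ∩ H3 is a normal subgroup of G. -/
/-!
If `a ∈ H₁` lies in neither `H₂` nor `H₃`, then every element outside `H₁`
lies in exactly one of `H₂`, `H₃`, and left multiplication by `a` swaps the two sides. A product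
of two elements from different sides escapes both `H₂` and `H₃`, hence lies in `H₁`; so the
complement of `H₁` is a single coset, `H₁` has index two and is normal. The same holds for `H₂`
and `H₃`, and an intersection of normal subgroups is normal.
-/

namespace Subgroup

variable {G : Type*} [Group G] {A B C : Subgroup G} {a x y : G}

lemma mul_mem_of_cover_of_mem_of_notMem (hcover : ∀ g, g ∈ A ∨ g ∈ B ∨ g ∈ C)
    (hxB : x ∈ B) (hxC : x ∉ C) (hyC : y ∈ C) (hyB : y ∉ B) : x * y ∈ A := by
  rcases hcover (x * y) with h | h | h
  · exact h
  · exact absurd ((mul_mem_cancel_left hxB).mp h) hyB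
  · exact absurd ((mul_mem_cancel_right hyC).mp h) hxC

lemma notMem_of_cover_of_mem_of_notMem (hcover : ∀ g, g ∈ A ∨ g ∈ B ∨ g ∈ C)
    (ha : a ∈ A) (haB : a ∉ B) (haC : a ∉ C) (hxA : x ∉ A) (hxB : x ∈ B) : x ∉ C := by
  intro hxC
  rcases hcover (a * x) with h | h | h
  · exact hxA ((mul_mem_cancel_left ha).mp h)
  · exact haB ((mul_mem_cancel_right hxB).mp h)
  · exact haC ((mul_mem_cancel_right hxC).mp h)

lemma mul_mem_of_cover_of_notMem (hcover : ∀ g, g ∈ A ∨ g ∈ B ∨ g ∈ C)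
    (ha : a ∈ A) (haB : a ∉ B) (hxA : x ∉ A) (hxB : x ∈ B) : a * x ∈ C := by
  rcases hcover (a * x) with h | h | h
  · exact absurd ((mul_mem_cancel_left ha).mp h) hxA
  · exact absurd ((mul_mem_cancel_right hxB).mp h) haB
  · exact h

lemma mul_mem_of_cover_of_notMem_of_mem (hcover : ∀ g, g ∈ A ∨ g ∈ B ∨ g ∈ C)
    (ha : a ∈ A) (haB : a ∉ B) (haC : a ∉ C) (hxA : x ∉ A) (hyA : y ∉ A) (hxB : x ∈ B) :
    x * y ∈ A := by
  have hcover' : ∀ g, g ∈ A ∨ g ∈ C ∨ g ∈ B := fun g ↦ (hcover g).imp_right Or.symm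
  rcases hcover y with hyA' | hyB | hyC
  · exact absurd hyA' hyA
  · -- `a * x` lies on the other side from `x`, hence from `y`
    have haxC : a * x ∈ C := mul_mem_of_cover_of_notMem hcover ha haB hxA hxB
    have haxB : a * x ∉ B := fun h ↦ haB ((mul_mem_cancel_right hxB).mp h)
    have hyC : y ∉ C := notMem_of_cover_of_mem_of_notMem hcover ha haB haC hyA hyB
    have := mul_mem_of_cover_of_mem_of_notMem hcover' haxC haxB hyB hyC
    rwa [mul_assoc, mul_mem_cancel_left ha] at this
  · exact mul_mem_of_cover_of_mem_of_notMem hcover hxB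
      (notMem_of_cover_of_mem_of_notMem hcover ha haB haC hxA hxB) hyC
      (notMem_of_cover_of_mem_of_notMem hcover' ha haC haB hyA hyC)

lemma mul_mem_of_cover_of_notMem_of_notMem (hcover : ∀ g, g ∈ A ∨ g ∈ B ∨ g ∈ C)
    (ha : a ∈ A) (haB : a ∉ B) (haC : a ∉ C) (hxA : x ∉ A) (hyA : y ∉ A) : x * y ∈ A := by
  rcases hcover x with hxA' | hxB | hxC
  · exact absurd hxA' hxA
  · exact mul_mem_of_cover_of_notMem_of_mem hcover ha haB haC hxA hyA hxB
  · exact mul_mem_of_cover_of_notMem_of_mem (fun g ↦ (hcover g).imp_right Or.symm)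
      ha haC haB hxA hyA hxC

lemma index_eq_two_of_cover_s2 (hcover : ∀ g, g ∈ A ∨ g ∈ B ∨ g ∈ C) (hA : A ≠ ⊤)
    (ha : a ∈ A) (haB : a ∉ B) (haC : a ∉ C) : A.index = 2 := by
  obtain ⟨z, -, hz⟩ := SetLike.exists_of_lt hA.lt_top
  refine index_eq_two_iff_exists_notMem_and.mpr ⟨z, hz, fun b ↦ ?_⟩
  by_cases hb : b ∈ A
  · exact Or.inr hb
  · exact Or.inl (mul_mem_of_cover_of_notMem_of_notMem hcover ha haB haC hb hz)

end Subgroup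

theorem inter_of_irredundant_cover_normal
    {G : Type*} [Group G] (H1 H2 H3 : Subgroup G)
    (h1 : H1 ≠ ⊤) (h2 : H2 ≠ ⊤) (h3 : H3 ≠ ⊤)
    (irr1 : ¬ (H1 : Set G) ⊆ (H2 : Set G) ∪ (H3 : Set G))
    (irr2 : ¬ (H2 : Set G) ⊆ (H1 : Set G) ∪ (H3 : Set G))
    (irr3 : ¬ (H3 : Set G) ⊆ (H1 : Set G) ∪ (H2 : Set G))
    (hcover : (H1 : Set G) ∪ (H2 : Set G) ∪ (H3 : Set G) = Set.univ) :
    (H1 ⊓ H2 ⊓ H3).Normal := by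
  have cover : ∀ g : G, g ∈ H1 ∨ g ∈ H2 ∨ g ∈ H3 := fun g ↦ by
    simpa [or_assoc] using Set.eq_univ_iff_forall.mp hcover g
  obtain ⟨a, ha1, ha23⟩ := Set.not_subset.mp irr1
  obtain ⟨b, hb2, hb13⟩ := Set.not_subset.mp irr2
  obtain ⟨c, hc3, hc12⟩ := Set.not_subset.mp irr3
  simp only [Set.mem_union, SetLike.mem_coe, not_or] at ha23 hb13 hc12
  have := Subgroup.normal_of_index_eq_two <|
    Subgroup.index_eq_two_of_cover_s2 cover h1 ha1 ha23.1 ha23.2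
  have := Subgroup.normal_of_index_eq_two <| Subgroup.index_eq_two_of_cover_s2
    (fun g ↦ by rcases cover g with h | h | h <;> tauto) h2 hb2 hb13.1 hb13.2
  have := Subgroup.normal_of_index_eq_two <| Subgroup.index_eq_two_of_cover_s2
    (fun g ↦ by rcases cover g with h | h | h <;> tauto) h3 hc3 hc12.1 hc12.2
  infer_instance
end

section
/- If G = H1 ∪ H2 ∪ H3 where H1, H2, H3 are irredundant proper subgroups of a group G, then x² ∈ H1 ∩ H2 ∩ H3 for every x ∈ G. -/
/-!
If `a ∈ A` lies in neither `B` nor `C`, then for `x ∈ B ⊓ C` the product `x * a` could lie in none of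
the three subgroups, so `B ⊓ C ≤ A`. If instead `x ∈ B \ C` and `y ∈ C \ B`, then `x * y` and `y⁻¹ * x`
avoid `B` and `C`, hence lie in `A`, and so does their product `x ^ 2`. Every `x ∉ A` falls under one of
these cases, up to swapping `B` and `C`.
-/

namespace Subgroup

variable {G : Type*} [Group G] {A B C : Subgroup G}

theorem inf_le_of_cover_s3 (hcover : ∀ g, g ∈ A ∨ g ∈ B ∨ g ∈ C) {a : G}
    (haA : a ∈ A) (haB : a ∉ B) (haC : a ∉ C) : B ⊓ C ≤ A := by
  intro x hx
  obtain ⟨hxB, hxC⟩ := mem_inf.1 hx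
  by_contra hxA
  rcases hcover (x * a) with h | h | h
  · exact hxA ((mul_mem_cancel_right haA).1 h)
  · exact haB ((mul_mem_cancel_left hxB).1 h)
  · exact haC ((mul_mem_cancel_left hxC).1 h)

theorem sq_mem_of_cover_of_mem_sdiff (hcover : ∀ g, g ∈ A ∨ g ∈ B ∨ g ∈ C) {x y : G}
    (hxB : x ∈ B) (hxC : x ∉ C) (hyC : y ∈ C) (hyB : y ∉ B) : x ^ 2 ∈ A := by
  have hxy : x * y ∈ A := by
    rcases hcover (x * y) with h | h | h
    · exact h
    · exact absurd ((mul_mem_cancel_left hxB).1 h) hyB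
    · exact absurd ((mul_mem_cancel_right hyC).1 h) hxC
  have hyx : y⁻¹ * x ∈ A := by
    rcases hcover (y⁻¹ * x) with h | h | h
    · exact h
    · exact absurd ((mul_mem_cancel_right hxB).1 h) (by simpa using hyB)
    · exact absurd ((mul_mem_cancel_left (inv_mem hyC)).1 h) hxC
  have hsq : x ^ 2 = (x * y) * (y⁻¹ * x) := by rw [sq]; group
  exact hsq ▸ mul_mem hxy hyx

theorem sq_mem_of_irredundant_cover (hcover : ∀ g, g ∈ A ∨ g ∈ B ∨ g ∈ C) {a b c : G}
    (haA : a ∈ A) (haB : a ∉ B) (haC : a ∉ C) (hbB : b ∈ B) (hbC : b ∉ C)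
    (hcC : c ∈ C) (hcB : c ∉ B) (x : G) : x ^ 2 ∈ A := by
  have hcover' : ∀ g, g ∈ A ∨ g ∈ C ∨ g ∈ B := fun g => (hcover g).imp_right Or.symm
  by_cases hxA : x ∈ A
  · exact pow_mem hxA 2
  by_cases hxB : x ∈ B <;> by_cases hxC : x ∈ C
  · exact absurd (inf_le_of_cover_s3 hcover haA haB haC ⟨hxB, hxC⟩) hxA
  · exact sq_mem_of_cover_of_mem_sdiff hcover hxB hxC hcC hcB
  · exact sq_mem_of_cover_of_mem_sdiff hcover' hxC hxB hbB hbC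
  · exact absurd (hcover x) (by tauto)

end Subgroup

theorem sq_mem_inter_of_irredundant_cover_general
    {G : Type*} [Group G] (H1 H2 H3 : Subgroup G)
    (irr1 : ¬ (H1 : Set G) ⊆ (H2 : Set G) ∪ (H3 : Set G))
    (irr2 : ¬ (H2 : Set G) ⊆ (H1 : Set G) ∪ (H3 : Set G))
    (irr3 : ¬ (H3 : Set G) ⊆ (H1 : Set G) ∪ (H2 : Set G))
    (hcover : (H1 : Set G) ∪ (H2 : Set G) ∪ (H3 : Set G) = Set.univ) :
    ∀ x : G, x ^ 2 ∈ H1 ⊓ H2 ⊓ H3 := by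
  obtain ⟨a, ha1, ha⟩ := Set.not_subset.mp irr1
  obtain ⟨b, hb2, hb⟩ := Set.not_subset.mp irr2
  obtain ⟨c, hc3, hc⟩ := Set.not_subset.mp irr3
  simp only [Set.mem_union, not_or, SetLike.mem_coe] at ha hb hc
  have hcov : ∀ g, g ∈ H1 ∨ g ∈ H2 ∨ g ∈ H3 := fun g => by
    simpa [or_assoc] using Set.eq_univ_iff_forall.1 hcover g
  intro x
  refine ⟨⟨?_, ?_⟩, ?_⟩
  · exact Subgroup.sq_mem_of_irredundant_cover hcov ha1 ha.1 ha.2 hb2 hb.2 hc3 hc.2 x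
  · exact Subgroup.sq_mem_of_irredundant_cover (fun g => or_left_comm.1 (hcov g))
      hb2 hb.1 hb.2 ha1 ha.2 hc3 hc.1 x
  · exact Subgroup.sq_mem_of_irredundant_cover (fun g => or_rotate.2 (hcov g))
      hc3 hc.1 hc.2 ha1 ha.1 hb2 hb.1 x

theorem sq_mem_inter_of_irredundant_cover
    {G : Type*} [Group G] (H1 H2 H3 : Subgroup G)
    (h1 : H1 ≠ ⊤) (h2 : H2 ≠ ⊤) (h3 : H3 ≠ ⊤)
    (irr1 : ¬ (H1 : Set G) ⊆ (H2 : Set G) ∪ (H3 : Set G))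
    (irr2 : ¬ (H2 : Set G) ⊆ (H1 : Set G) ∪ (H3 : Set G))
    (irr3 : ¬ (H3 : Set G) ⊆ (H1 : Set G) ∪ (H2 : Set G))
    (hcover : (H1 : Set G) ∪ (H2 : Set G) ∪ (H3 : Set G) = Set.univ) :
    ∀ x : G, x ^ 2 ∈ H1 ⊓ H2 ⊓ H3 :=
  sq_mem_inter_of_irredundant_cover_general H1 H2 H3 irr1 irr2 irr3 hcover
end

section
/- If G = H1 ∪ H2 ∪ H3 where H1, H2, H3 are irredundant proper subgroups of a group G, then the quotient G / (H1 ∩ H2 ∩ H3) is isomorphic to C2 × C2. -/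
/-!
Pick `a ∈ H₁ \ (H₂ ∪ H₃)` and `b ∈ H₂ \ (H₁ ∪ H₃)`. Chasing products with `a` through the cover
shows that the product of any two elements outside `H₁` lies in `H₁`, so `H₁` has index two;
likewise `H₂`. The two index-two quotients give a map `G → C₂ × C₂`, onto because `H₁` and `H₂`
are incomparable, with kernel `H₁ ∩ H₂`. Finally `H₁ ∩ H₂ ≤ H₃`: for `x ∈ H₁ ∩ H₂` both `b * a`
and `x * b * a` avoid `H₁ ∪ H₂`, hence lie in `H₃`.
-/

namespace Subgroup

variable {G : Type*} [Group G] {A B C : Subgroup G}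

theorem inf_le_of_forall_mem_or (hcover : ∀ g, g ∈ A ∨ g ∈ B ∨ g ∈ C) {g : G}
    (hgA : g ∉ A) (hgB : g ∉ B) : A ⊓ B ≤ C := by
  intro x hx
  obtain ⟨hxA, hxB⟩ := mem_inf.1 hx
  have hgC : g ∈ C := ((hcover g).resolve_left hgA).resolve_left hgB
  have hxgC : x * g ∈ C :=
    ((hcover (x * g)).resolve_left (by rwa [mul_mem_cancel_left hxA])).resolve_left
      (by rwa [mul_mem_cancel_left hxB])
  simpa using C.mul_mem hxgC (C.inv_mem hgC)

theorem mul_mem_of_forall_mem_or_of_mem_of_mem (hcover : ∀ g, g ∈ A ∨ g ∈ B ∨ g ∈ C) {x y : G}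
    (hxB : x ∈ B) (hxC : x ∉ C) (hyC : y ∈ C) (hyB : y ∉ B) : x * y ∈ A := by
  rcases hcover (x * y) with h | h | h
  · exact h
  · exact absurd ((mul_mem_cancel_left hxB).1 h) hyB
  · exact absurd ((mul_mem_cancel_right hyC).1 h) hxC

section

variable (hcover : ∀ g, g ∈ A ∨ g ∈ B ∨ g ∈ C) {a : G} (ha : a ∈ A) (haB : a ∉ B) (haC : a ∉ C)
include hcover ha haB haC

theorem mul_mem_of_forall_mem_or_of_both_mem {x y : G} (hxA : x ∉ A) (hyA : y ∉ A)
    (hxB : x ∈ B) (hyB : y ∈ B) : x * y ∈ A := by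
  have hBC : B ⊓ C ≤ A := inf_le_of_forall_mem_or (fun g => or_rotate.1 (hcover g)) haB haC
  have mul_left_mem : ∀ z ∈ B, z ∉ A → a * z ∈ C := fun z hzB hzA =>
    ((hcover (a * z)).resolve_left (by rwa [mul_mem_cancel_left ha])).resolve_left
      (by rwa [mul_mem_cancel_right hzB])
  by_contra hxyA
  have hyC : y ∈ C := by
    simpa [mul_assoc] using C.mul_mem (C.inv_mem (mul_left_mem x hxB hxA))
      (mul_left_mem (x * y) (B.mul_mem hxB hyB) hxyA)
  exact hyA (hBC ⟨hyB, hyC⟩)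

theorem mul_mem_of_forall_mem_or_of_notMem {x y : G} (hxA : x ∉ A) (hyA : y ∉ A) :
    x * y ∈ A := by
  have hcover' : ∀ g, g ∈ A ∨ g ∈ C ∨ g ∈ B := fun g => (or_congr_right or_comm).1 (hcover g)
  have hBC : B ⊓ C ≤ A := inf_le_of_forall_mem_or (fun g => or_rotate.1 (hcover g)) haB haC
  have mem_C_iff : ∀ z ∉ A, z ∈ C ↔ z ∉ B := fun z hzA =>
    ⟨fun hzC hzB => hzA (hBC ⟨hzB, hzC⟩), ((hcover z).resolve_left hzA).resolve_left⟩
  have hxC := mem_C_iff x hxA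
  have hyC := mem_C_iff y hyA
  by_cases hxB : x ∈ B <;> by_cases hyB : y ∈ B
  · exact mul_mem_of_forall_mem_or_of_both_mem hcover ha haB haC hxA hyA hxB hyB
  · exact mul_mem_of_forall_mem_or_of_mem_of_mem hcover hxB (fun h => hxC.1 h hxB) (hyC.2 hyB) hyB
  · exact mul_mem_of_forall_mem_or_of_mem_of_mem hcover' (hxC.2 hxB) hxB hyB (fun h => hyC.1 h hyB)
  · exact mul_mem_of_forall_mem_or_of_both_mem hcover' ha haC haB hxA hyA (hxC.2 hxB) (hyC.2 hyB)

theorem index_eq_two_of_forall_mem_or {g : G} (hgA : g ∉ A) : A.index = 2 :=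
  index_eq_two_iff_exists_notMem_and'.2 ⟨g, hgA, fun y => by
    by_cases hyA : y ∈ A
    · exact Or.inr hyA
    · exact Or.inl (mul_mem_of_forall_mem_or_of_notMem hcover ha haB haC hgA hyA)⟩

end

theorem exists_ker_eq_of_index_eq_two {H : Subgroup G} (hH : H.index = 2) :
    ∃ φ : G →* Multiplicative (ZMod 2), φ.ker = H := by
  have := normal_of_index_eq_two hH
  let e : G ⧸ H ≃* Multiplicative (ZMod 2) := mulEquivOfPrimeCardEq (p := 2) hH (by simp)
  exact ⟨e.toMonoidHom.comp (QuotientGroup.mk' H), by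
    rw [MonoidHom.ker_comp_of_injective _ _ e.injective, QuotientGroup.ker_mk']⟩

end Subgroup

theorem MonoidHom.prod_surjective_of_ker_not_le {G : Type*} [Group G]
    {φ ψ : G →* Multiplicative (ZMod 2)} (hφψ : ¬ φ.ker ≤ ψ.ker) (hψφ : ¬ ψ.ker ≤ φ.ker) :
    Function.Surjective (φ.prod ψ) := by
  obtain ⟨a, haφ, haψ⟩ := SetLike.not_le_iff_exists.1 hφψ
  obtain ⟨b, hbψ, hbφ⟩ := SetLike.not_le_iff_exists.1 hψφ
  rw [mem_ker] at haφ haψ hbψ hbφ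
  have eq_one_or_eq : ∀ {u : Multiplicative (ZMod 2)}, u ≠ 1 → ∀ v, v = 1 ∨ v = u := by decide
  rintro ⟨s, t⟩
  obtain rfl | rfl := eq_one_or_eq hbφ s <;> obtain rfl | rfl := eq_one_or_eq haψ t
  exacts [⟨1, by simp⟩, ⟨a, by simp [haφ]⟩, ⟨b, by simp [hbψ]⟩, ⟨b * a, by simp [haφ, hbψ]⟩]

theorem quotient_of_irredundant_cover_is_klein_general
    {G : Type*} [Group G] (H1 H2 H3 : Subgroup G)
    (irr1 : ¬ (H1 : Set G) ⊆ (H2 : Set G) ∪ (H3 : Set G))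
    (irr2 : ¬ (H2 : Set G) ⊆ (H1 : Set G) ∪ (H3 : Set G))
    (hcover : (H1 : Set G) ∪ (H2 : Set G) ∪ (H3 : Set G) = Set.univ) :
    ∃ φ : G →* Multiplicative (ZMod 2) × Multiplicative (ZMod 2), Function.Surjective φ ∧ φ.ker = H1 ⊓ H2 ⊓ H3 := by
  obtain ⟨a, ha1, ha⟩ := Set.not_subset.1 irr1
  obtain ⟨b, hb2, hb⟩ := Set.not_subset.1 irr2
  simp only [Set.mem_union, SetLike.mem_coe, not_or] at ha1 hb2 ha hb
  obtain ⟨ha2, ha3⟩ := ha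
  obtain ⟨hb1, hb3⟩ := hb
  have cover : ∀ g, g ∈ H1 ∨ g ∈ H2 ∨ g ∈ H3 := fun g => by
    simpa [or_assoc] using Set.eq_univ_iff_forall.1 hcover g
  obtain ⟨φ₁, hφ₁⟩ := Subgroup.exists_ker_eq_of_index_eq_two
    (Subgroup.index_eq_two_of_forall_mem_or cover ha1 ha2 ha3 hb1)
  obtain ⟨φ₂, hφ₂⟩ := Subgroup.exists_ker_eq_of_index_eq_two
    (Subgroup.index_eq_two_of_forall_mem_or (fun g => or_left_comm.1 (cover g)) hb2 hb1 hb3 ha2)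
  have h12 : H1 ⊓ H2 ≤ H3 := Subgroup.inf_le_of_forall_mem_or cover (g := b * a)
    (by rwa [mul_mem_cancel_right ha1]) (by rwa [mul_mem_cancel_left hb2])
  refine ⟨φ₁.prod φ₂, MonoidHom.prod_surjective_of_ker_not_le ?_ ?_, ?_⟩
  · rw [hφ₁, hφ₂]; exact fun h => ha2 (h ha1)
  · rw [hφ₁, hφ₂]; exact fun h => hb1 (h hb2)
  · rw [MonoidHom.ker_prod, hφ₁, hφ₂, inf_eq_left.2 h12]

theorem quotient_of_irredundant_cover_is_klein
    {G : Type*} [Group G] (H1 H2 H3 : Subgroup G)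
    (h1 : H1 ≠ ⊤) (h2 : H2 ≠ ⊤) (h3 : H3 ≠ ⊤)
    (irr1 : ¬ (H1 : Set G) ⊆ (H2 : Set G) ∪ (H3 : Set G))
    (irr2 : ¬ (H2 : Set G) ⊆ (H1 : Set G) ∪ (H3 : Set G))
    (irr3 : ¬ (H3 : Set G) ⊆ (H1 : Set G) ∪ (H2 : Set G))
    (hcover : (H1 : Set G) ∪ (H2 : Set G) ∪ (H3 : Set G) = Set.univ) :
    ∃ φ : G →* Multiplicative (ZMod 2) × Multiplicative (ZMod 2), Function.Surjective φ ∧ φ.ker = H1 ⊓ H2 ⊓ H3 :=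
  quotient_of_irredundant_cover_is_klein_general H1 H2 H3 irr1 irr2 hcover
end

section
/- For a finite group G, G has a unique quotient isomorphic to C2 × C2 if and only if G has a quotient isomorphic to C2 × C2 and no quotient isomorphic to C2 × C2 × C2. -/
/-!
If `φ, χ : G → C₂ × C₂` are surjections with `ker φ ⊄ ker χ`, some coordinate `f` of `χ` is
nontrivial on `ker φ`, and then `(φ, f) : G → C₂³` is onto. Conversely, `C₂³` has two distinct
`C₂ × C₂` quotients, which pull back to two distinct kernels in `G`.
-/

open Function

local notation "C₂" => Multiplicative (ZMod 2)

namespace MonoidHom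

variable {G A H : Type*} [Group G] [Group A] [Group H]

theorem prod_surjective_of_map_ker_eq_top {φ : G →* A} (f : G →* H) (hφ : Surjective φ)
    (hf : φ.ker.map f = ⊤) : Surjective (φ.prod f) := by
  rintro ⟨a, h⟩
  obtain ⟨g, rfl⟩ := hφ a
  obtain ⟨n, hn, hfn⟩ : (f g)⁻¹ * h ∈ φ.ker.map f := hf ▸ Subgroup.mem_top _
  refine ⟨g * n, ?_⟩
  simp [(mem_ker).mp hn, hfn]

theorem prod_surjective_of_not_ker_le {φ : G →* A} (f : G →* C₂) (hφ : Surjective φ)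
    (hf : ¬ φ.ker ≤ f.ker) : Surjective (φ.prod f) := by
  have : Fact (Nat.card C₂).Prime := ⟨by simp [Nat.prime_two]⟩
  exact prod_surjective_of_map_ker_eq_top f hφ <|
    (Subgroup.eq_bot_or_eq_top_of_prime_card _).resolve_left (mt (Subgroup.map_eq_bot_iff _).mp hf)

end MonoidHom

theorem exists_surjective_c2_cubed_of_not_ker_le {G : Type*} [Group G] {φ χ : G →* C₂ × C₂}
    (hφ : Surjective φ) (hker : ¬ φ.ker ≤ χ.ker) :
    ∃ ψ : G →* C₂ × C₂ × C₂, Surjective ψ := by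
  have hχ : χ.ker = ((MonoidHom.fst C₂ C₂).comp χ).ker ⊓ ((MonoidHom.snd C₂ C₂).comp χ).ker := by
    rw [← MonoidHom.ker_prod, MonoidHom.prod_unique]
  rw [hχ, le_inf_iff, not_and_or] at hker
  obtain ⟨f, hf⟩ : ∃ f : G →* C₂, ¬ φ.ker ≤ f.ker := hker.elim (⟨_, ·⟩) (⟨_, ·⟩)
  let e : (C₂ × C₂) × C₂ ≃* C₂ × C₂ × C₂ := MulEquiv.prodAssoc
  exact ⟨e.toMonoidHom.comp (φ.prod f),
    e.surjective.comp (MonoidHom.prod_surjective_of_not_ker_le f hφ hf)⟩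

theorem exists_klein_quotients_ker_ne_of_surjective_c2_cubed {G : Type*} [Group G]
    {ψ : G →* C₂ × C₂ × C₂} (hψ : Surjective ψ) :
    ∃ φ₁ φ₂ : G →* C₂ × C₂, Surjective φ₁ ∧ Surjective φ₂ ∧ φ₁.ker ≠ φ₂.ker := by
  let p₁₂ : C₂ × C₂ × C₂ →* C₂ × C₂ :=
    (MonoidHom.fst _ _).prod ((MonoidHom.fst _ _).comp (MonoidHom.snd _ _))
  let p₁₃ : C₂ × C₂ × C₂ →* C₂ × C₂ :=
    (MonoidHom.fst _ _).prod ((MonoidHom.snd _ _).comp (MonoidHom.snd _ _))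
  have hp₁₂ : Surjective p₁₂ := fun ⟨x, y⟩ => ⟨(x, y, 1), rfl⟩
  have hp₁₃ : Surjective p₁₃ := fun ⟨x, y⟩ => ⟨(x, 1, y), rfl⟩
  have hne : p₁₂.ker ≠ p₁₃.ker := fun h => by
    have : ((1, 1, Multiplicative.ofAdd 1) : C₂ × C₂ × C₂) ∈ p₁₃.ker := h ▸ rfl
    exact absurd this (by decide)
  refine ⟨p₁₂.comp ψ, p₁₃.comp ψ, hp₁₂.comp hψ, hp₁₃.comp hψ, ?_⟩
  rw [← MonoidHom.comap_ker, ← MonoidHom.comap_ker]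
  exact (Subgroup.comap_injective hψ).ne hne

theorem unique_klein_quotient_iff_no_c2_cubed_quotient_general
    (G : Type*) [Group G] :
    (∃! N : Subgroup G,
      ∃ φ : G →* Multiplicative (ZMod 2) × Multiplicative (ZMod 2), Function.Surjective φ ∧ φ.ker = N) ↔
    ((∃ φ : G →* Multiplicative (ZMod 2) × Multiplicative (ZMod 2), Function.Surjective φ) ∧
      ¬ ∃ ψ : G →* Multiplicative (ZMod 2) × Multiplicative (ZMod 2) × Multiplicative (ZMod 2), Function.Surjective ψ) := by
  constructor
  · rintro ⟨N, ⟨φ, hφ, -⟩, huniq⟩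
    refine ⟨⟨φ, hφ⟩, fun ⟨ψ, hψ⟩ => ?_⟩
    obtain ⟨φ₁, φ₂, h₁, h₂, hne⟩ := exists_klein_quotients_ker_ne_of_surjective_c2_cubed hψ
    exact hne ((huniq _ ⟨φ₁, h₁, rfl⟩).trans (huniq _ ⟨φ₂, h₂, rfl⟩).symm)
  · rintro ⟨⟨φ, hφ⟩, hno⟩
    refine ⟨φ.ker, ⟨φ, hφ, rfl⟩, ?_⟩
    rintro _ ⟨χ, hχ, rfl⟩
    by_contra hne
    rcases not_and_or.mp (mt (fun h => le_antisymm h.1 h.2) hne) with h | h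
    · exact hno (exists_surjective_c2_cubed_of_not_ker_le hχ h)
    · exact hno (exists_surjective_c2_cubed_of_not_ker_le hφ h)

theorem unique_klein_quotient_iff_no_c2_cubed_quotient
    (G : Type*) [Group G] [Finite G] :
    (∃! N : Subgroup G,
      ∃ φ : G →* Multiplicative (ZMod 2) × Multiplicative (ZMod 2), Function.Surjective φ ∧ φ.ker = N) ↔
    ((∃ φ : G →* Multiplicative (ZMod 2) × Multiplicative (ZMod 2), Function.Surjective φ) ∧
      ¬ ∃ ψ : G →* Multiplicative (ZMod 2) × Multiplicative (ZMod 2) × Multiplicative (ZMod 2), Function.Surjective ψ) :=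
  unique_klein_quotient_iff_no_c2_cubed_quotient_general G
end

section
/- If A is a finite group of odd order, then the group Q8 × A can uniquely be written as the union of three proper subgroups. -/
/-!
If three proper subgroups cover a group, each of them contains an element lying in neither of the
other two; translating by such elements shows that every square lies in all three subgroups.
In `Q₈ × A` with `|A|` odd every element of `A` is a square, so each subgroup of a cover contains
`1 × A` and is therefore `K × A` for a proper subgroup `K` of `Q₈`. Each of `i`, `j`, `k` lies in
one of these `K`, and `⟨i⟩`, `⟨j⟩`, `⟨k⟩` have index 2, hence are maximal: the cover must be
`⟨i⟩ × A`, `⟨j⟩ × A`, `⟨k⟩ × A`.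
-/

open Subgroup QuaternionGroup

namespace Subgroup

variable {G : Type*} [Group G]

theorem exists_notMem_of_ne_top_of_ne_top {H K : Subgroup G} (hH : H ≠ ⊤) (hK : K ≠ ⊤) :
    ∃ x, x ∉ H ∧ x ∉ K := by
  obtain ⟨x, hx⟩ : ∃ x, x ∉ H := by simpa only [Ne, eq_top_iff', not_forall] using hH
  obtain ⟨y, hy⟩ : ∃ y, y ∉ K := by simpa only [Ne, eq_top_iff', not_forall] using hK
  by_cases hxK : x ∈ K
  · by_cases hyH : y ∈ H
    · exact ⟨x * y, fun h => hx ((mul_mem_cancel_right hyH).mp h),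
        fun h => hy ((mul_mem_cancel_left hxK).mp h)⟩
    · exact ⟨y, hyH, hy⟩
  · exact ⟨x, hx, hxK⟩

theorem eq_of_le_of_index_prime {H K : Subgroup G} (hp : H.index.Prime) (hle : H ≤ K)
    (hK : K ≠ ⊤) : K = H := by
  have hdvd : K.index ∣ H.index := index_dvd_of_le hle
  rcases (Nat.dvd_prime hp).mp hdvd with h | h
  · exact absurd (index_eq_one.mp h) hK
  · have hrel : H.relIndex K = 1 :=
      (Nat.mul_eq_right hp.ne_zero).mp (h ▸ relIndex_mul_index hle)
    exact le_antisymm (relIndex_eq_one.mp hrel) hle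

section CoverByThree

variable {H₁ H₂ H₃ : Subgroup G}

theorem exists_mem_notMem_notMem_of_cover (cover : ∀ g, g ∈ H₁ ∨ g ∈ H₂ ∨ g ∈ H₃)
    (h₂ : H₂ ≠ ⊤) (h₃ : H₃ ≠ ⊤) : ∃ x ∈ H₁, x ∉ H₂ ∧ x ∉ H₃ := by
  obtain ⟨x, hx₂, hx₃⟩ := exists_notMem_of_ne_top_of_ne_top h₂ h₃
  exact ⟨x, (cover x).resolve_right (not_or.mpr ⟨hx₂, hx₃⟩), hx₂, hx₃⟩

theorem mem_of_mem_of_mem_of_cover (cover : ∀ g, g ∈ H₁ ∨ g ∈ H₂ ∨ g ∈ H₃) (h₂ : H₂ ≠ ⊤)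
    (h₃ : H₃ ≠ ⊤) {t : G} (ht₂ : t ∈ H₂) (ht₃ : t ∈ H₃) : t ∈ H₁ := by
  obtain ⟨x, hx₁, hx₂, hx₃⟩ := exists_mem_notMem_notMem_of_cover cover h₂ h₃
  rcases cover (x * t) with h | h | h
  · exact (mul_mem_cancel_left hx₁).mp h
  · exact absurd ((mul_mem_cancel_right ht₂).mp h) hx₂
  · exact absurd ((mul_mem_cancel_right ht₃).mp h) hx₃

theorem sq_mem_of_mem_of_cover (cover : ∀ g, g ∈ H₁ ∨ g ∈ H₂ ∨ g ∈ H₃) (h₂ : H₂ ≠ ⊤)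
    (h₃ : H₃ ≠ ⊤) {g : G} (hg₂ : g ∈ H₂) : g ^ 2 ∈ H₁ := by
  by_cases hg₁ : g ∈ H₁
  · exact pow_mem hg₁ 2
  by_cases hg₃ : g ∈ H₃
  · exact pow_mem (mem_of_mem_of_mem_of_cover cover h₂ h₃ hg₂ hg₃) 2
  obtain ⟨x, hx₁, hx₂, hx₃⟩ := exists_mem_notMem_notMem_of_cover cover h₂ h₃
  have hgx₃ : g * x ∈ H₃ := by
    rcases cover (g * x) with h | h | h
    · exact absurd ((mul_mem_cancel_right hx₁).mp h) hg₁
    · exact absurd ((mul_mem_cancel_left hg₂).mp h) hx₂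
    · exact h
  rcases cover (g * (g * x)) with h | h | h
  · rwa [← mul_assoc, mul_mem_cancel_right hx₁, ← sq] at h
  · exact absurd ((mul_mem_cancel_left hg₂).mp ((mul_mem_cancel_left hg₂).mp h)) hx₂
  · exact absurd ((mul_mem_cancel_right hgx₃).mp h) hg₃

theorem sq_mem_of_cover (cover : ∀ g, g ∈ H₁ ∨ g ∈ H₂ ∨ g ∈ H₃) (h₂ : H₂ ≠ ⊤) (h₃ : H₃ ≠ ⊤)
    (g : G) : g ^ 2 ∈ H₁ := by
  rcases cover g with hg | hg | hg
  · exact pow_mem hg 2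
  · exact sq_mem_of_mem_of_cover cover h₂ h₃ hg
  · exact sq_mem_of_mem_of_cover (fun g => (cover g).imp_right Or.symm) h₃ h₂ hg

end CoverByThree

theorem eq_prod_top_of_bot_prod_top_le {Q A : Type*} [Group Q] [Group A] {H : Subgroup (Q × A)}
    (h : (⊥ : Subgroup Q).prod ⊤ ≤ H) : H = (H.map (MonoidHom.fst Q A)).prod ⊤ := by
  rw [prod_top, comap_map_eq_self (by rwa [MonoidHom.ker_fst])]

theorem bot_prod_top_le_of_sq_mem {Q A : Type*} [Group Q] [Group A] (hA : Odd (Nat.card A))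
    {H : Subgroup (Q × A)} (hsq : ∀ g, g ^ 2 ∈ H) : (⊥ : Subgroup Q).prod ⊤ ≤ H := by
  rintro ⟨q, b⟩ hqb
  obtain rfl : q = 1 := mem_bot.mp (mem_prod.mp hqb).1
  obtain ⟨c, rfl⟩ := (powCoprime (Nat.coprime_two_right.mpr hA)).surjective b
  simpa using hsq (1, c)

end Subgroup

namespace QuaternionGroup

/-- The elements `i`, `j`, `-k` of `Q₈` in Mathlib's presentation `⟨a, x⟩`. -/
def imagUnit : Fin 3 → QuaternionGroup 2 := ![a 1, xa 0, xa 1]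

theorem index_zpowers_imagUnit (k : Fin 3) : (zpowers (imagUnit k)).index = 2 := by
  have hcard : Nat.card (QuaternionGroup 2) = 8 := by rw [Nat.card_eq_fintype_card, card]
  have horder : orderOf (imagUnit k) = 4 := by
    fin_cases k <;> simp [imagUnit, orderOf_xa, orderOf_a_one]
  have := index_mul_card (zpowers (imagUnit k))
  rw [Nat.card_zpowers, horder, hcard] at this
  omega

theorem imagUnit_notMem_zpowers {k l : Fin 3} (h : k ≠ l) : imagUnit k ∉ zpowers (imagUnit l) := by
  have hcomm : ∀ k l : Fin 3, k ≠ l → imagUnit k * imagUnit l ≠ imagUnit l * imagUnit k := by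
    decide
  intro hkl
  obtain ⟨n, hn⟩ := mem_zpowers_iff.mp hkl
  have hcomm_kl := ((Commute.refl (imagUnit l)).zpow_left n).eq
  rw [hn] at hcomm_kl
  exact hcomm k l h hcomm_kl

theorem exists_mem_zpowers_imagUnit (q : QuaternionGroup 2) : ∃ k, q ∈ zpowers (imagUnit k) := by
  have : ∀ q : QuaternionGroup 2, ∃ k : Fin 3, ∃ n : Fin 4, imagUnit k ^ (n : ℕ) = q := by decide
  obtain ⟨k, n, rfl⟩ := this q
  exact ⟨k, npow_mem_zpowers _ _⟩

variable (A : Type*) [Group A]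

def imagSubgroup (k : Fin 3) : Subgroup (QuaternionGroup 2 × A) :=
  (zpowers (imagUnit k)).prod ⊤

variable {A}

theorem mem_imagSubgroup {k : Fin 3} {g : QuaternionGroup 2 × A} :
    g ∈ imagSubgroup A k ↔ g.1 ∈ zpowers (imagUnit k) := by
  simp [imagSubgroup, mem_prod]

theorem imagSubgroup_injective : Function.Injective (imagSubgroup A) := by
  intro k l h
  by_contra hkl
  have hk : (imagUnit k, (1 : A)) ∈ imagSubgroup A l := h ▸ mem_imagSubgroup.mpr (mem_zpowers _)
  exact imagUnit_notMem_zpowers hkl (mem_imagSubgroup.mp hk)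

theorem imagSubgroup_ne_top (k : Fin 3) : imagSubgroup A k ≠ ⊤ := fun h =>
  imagUnit_notMem_zpowers (by simp : k + 1 ≠ k)
    (mem_imagSubgroup.mp (h ▸ mem_top ((imagUnit (k + 1), (1 : A)))))

theorem eq_imagSubgroup_of_sq_mem (hA : Odd (Nat.card A)) {H : Subgroup (QuaternionGroup 2 × A)}
    (hsq : ∀ g, g ^ 2 ∈ H) (hH : H ≠ ⊤) {k : Fin 3} (hk : (imagUnit k, (1 : A)) ∈ H) :
    H = imagSubgroup A k := by
  have hprod := eq_prod_top_of_bot_prod_top_le (bot_prod_top_le_of_sq_mem hA hsq)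
  have hK : H.map (MonoidHom.fst _ A) ≠ ⊤ := fun h => hH (by rwa [h, top_prod_top] at hprod)
  have hkK : imagUnit k ∈ H.map (MonoidHom.fst _ A) := mem_map.mpr ⟨_, hk, rfl⟩
  have hp : (zpowers (imagUnit k)).index.Prime := by
    rw [index_zpowers_imagUnit]; exact Nat.prime_two
  rw [hprod, imagSubgroup, eq_of_le_of_index_prime hp (zpowers_le.mpr hkK) hK]

end QuaternionGroup

theorem q8_times_odd_unique_cover_general
    (A : Type*) [Group A] (hA : Odd (Nat.card A)) :
    ∃! S : Set (Subgroup (QuaternionGroup 2 × A)),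
      ∃ H1 H2 H3 : Subgroup (QuaternionGroup 2 × A), S = {H1, H2, H3} ∧
        H1 ≠ H2 ∧ H1 ≠ H3 ∧ H2 ≠ H3 ∧
        H1 ≠ ⊤ ∧ H2 ≠ ⊤ ∧ H3 ≠ ⊤ ∧
        (H1 : Set (QuaternionGroup 2 × A)) ∪ (H2 : Set (QuaternionGroup 2 × A)) ∪
          (H3 : Set (QuaternionGroup 2 × A)) = Set.univ := by
  have hP := imagSubgroup_injective (A := A)
  have hP₀₁ : imagSubgroup A 0 ≠ imagSubgroup A 1 := hP.ne (by decide)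
  have hP₀₂ : imagSubgroup A 0 ≠ imagSubgroup A 2 := hP.ne (by decide)
  have hP₁₂ : imagSubgroup A 1 ≠ imagSubgroup A 2 := hP.ne (by decide)
  refine ⟨_, ⟨_, _, _, rfl, hP₀₁, hP₀₂, hP₁₂, imagSubgroup_ne_top 0, imagSubgroup_ne_top 1,
    imagSubgroup_ne_top 2, Set.eq_univ_of_forall fun g => ?_⟩, ?_⟩
  · obtain ⟨k, hk⟩ := exists_mem_zpowers_imagUnit g.1
    replace hk : g ∈ imagSubgroup A k := mem_imagSubgroup.mpr hk
    fin_cases k <;> simp_all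
  rintro _ ⟨H₁, H₂, H₃, rfl, h₁₂, h₁₃, h₂₃, h₁, h₂, h₃, hcover⟩
  have cover (g : QuaternionGroup 2 × A) : g ∈ H₁ ∨ g ∈ H₂ ∨ g ∈ H₃ := by
    simpa [or_assoc] using Set.eq_univ_iff_forall.mp hcover g
  have hsub (k : Fin 3) : imagSubgroup A k ∈ ({H₁, H₂, H₃} : Set _) := by
    rcases cover (imagUnit k, 1) with hk | hk | hk
    · exact .inl (eq_imagSubgroup_of_sq_mem hA (sq_mem_of_cover cover h₂ h₃) h₁ hk).symm
    · exact .inr (.inl (eq_imagSubgroup_of_sq_mem hA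
        (sq_mem_of_cover (fun g => (cover g).rotate) h₃ h₁) h₂ hk).symm)
    · exact .inr (.inr (eq_imagSubgroup_of_sq_mem hA
        (sq_mem_of_cover (fun g => (cover g).rotate.rotate) h₁ h₂) h₃ hk).symm)
  refine (Set.eq_of_subset_of_ncard_le ?_ ?_ (Set.toFinite _)).symm
  · rintro _ (rfl | rfl | rfl) <;> apply hsub
  · rw [Set.ncard_eq_three.mpr ⟨_, _, _, h₁₂, h₁₃, h₂₃, rfl⟩,
      Set.ncard_eq_three.mpr ⟨_, _, _, hP₀₁, hP₀₂, hP₁₂, rfl⟩]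

theorem q8_times_odd_unique_cover
    (A : Type*) [Group A] [Finite A] (hA : Odd (Nat.card A)) :
    ∃! S : Set (Subgroup (QuaternionGroup 2 × A)),
      ∃ H1 H2 H3 : Subgroup (QuaternionGroup 2 × A), S = {H1, H2, H3} ∧
        H1 ≠ H2 ∧ H1 ≠ H3 ∧ H2 ≠ H3 ∧
        H1 ≠ ⊤ ∧ H2 ≠ ⊤ ∧ H3 ≠ ⊤ ∧
        (H1 : Set (QuaternionGroup 2 × A)) ∪ (H2 : Set (QuaternionGroup 2 × A)) ∪
          (H3 : Set (QuaternionGroup 2 × A)) = Set.univ :=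
  q8_times_odd_unique_cover_general A hA
end
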